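/- The linear map from the real Diamond Lie algebra to 4×4 real matrices sending θJ + αP1 + βP2 + γT to the matrix with rows (0, α, β, 2γ), (0, 0, -θ, β), (0, θ, 0, -α), (0, 0, 0, 0) is an injective Lie algebra homomorphism into sp(4,ℝ) (matrices with commutator bracket). -/

import Mathlib

open Matrix

/-- Bracket of the real Diamond Lie algebra in the basis `{J, P1, P2, T}`
(coordinates indexed `0,1,2,3`): `[J,P1]=P2`, `[J,P2]=-P1`, `[P1,P2]=T`. -/
def diamondBracketR (u v : Fin 4 → ℝ) : Fin 4 → ℝ :=
  ![0, -(u 0 * v 2 - u 2 * v 0), u 0 * v 1 - u 1 * v 0, u 1 * v 2 - u 2 * v 1]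

/-- The map sending `θJ + αP1 + βP2 + γT` (coordinates `u = (θ,α,β,γ)`) to the matrix
with rows `(0,α,β,2γ)`, `(0,0,-θ,β)`, `(0,θ,0,-α)`, `(0,0,0,0)`. -/
def thetaMap (u : Fin 4 → ℝ) : Matrix (Fin 4) (Fin 4) ℝ :=
  !![0, u 1, u 2, 2 * u 3;
     0, 0, -u 0, u 2;
     0, u 0, 0, -u 1;
     0, 0, 0, 0]

/-- An antisymmetric invertible form exhibiting the image as lying in `sp(4,ℝ)`. -/
def omegaForm : Matrix (Fin 4) (Fin 4) ℝ :=
  !![0, 0, 0, 1;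
     0, 0, 1, 0;
     0, -1, 0, 0;
     -1, 0, 0, 0]

/-- The realization map of the real Diamond Lie algebra is an injective Lie algebra
homomorphism into `sp(4,ℝ)` (with the commutator bracket). -/
theorem theta_injective_hom_into_sp4 :
    Function.Injective thetaMap ∧
    (omegaForm.transpose = -omegaForm ∧ IsUnit omegaForm.det ∧
      ∀ u : Fin 4 → ℝ, (thetaMap u).transpose * omegaForm + omegaForm * thetaMap u = 0) ∧
    (∀ u v : Fin 4 → ℝ,
      thetaMap (diamondBracketR u v) = thetaMap u * thetaMap v - thetaMap v * thetaMap u) := by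
  refine ⟨?_, ⟨?_, ?_, ?_⟩, ?_⟩
  · intro u v h
    funext i
    have h01 := congrFun (congrFun h 0) 1
    have h02 := congrFun (congrFun h 0) 2
    have h03 := congrFun (congrFun h 0) 3
    have h21 := congrFun (congrFun h 2) 1
    simp [thetaMap] at h01 h02 h03 h21
    fin_cases i <;> simp_all
  · funext i j
    simp only [Matrix.transpose_apply, Matrix.neg_apply]
    fin_cases i <;> fin_cases j <;> norm_num [omegaForm]
  · apply Matrix.isUnit_det_of_right_inverse (B := -omegaForm)
    funext i j
    simp only [Matrix.mul_apply, Fin.sum_univ_four, Matrix.neg_apply]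
    fin_cases i <;> fin_cases j <;> norm_num [omegaForm, Matrix.one_apply, Matrix.vecHead, Matrix.vecTail, Fin.ext_iff, Matrix.cons_val_two, Matrix.cons_val_three]
  · intro u
    funext i j
    simp only [Matrix.add_apply, Matrix.mul_apply, Matrix.transpose_apply,
      Fin.sum_univ_four, Matrix.zero_apply]
    fin_cases i <;> fin_cases j <;> norm_num [thetaMap, omegaForm, Matrix.vecHead, Matrix.vecTail, Matrix.cons_val_two, Matrix.cons_val_three] <;> ring
  · intro u v
    funext i j
    simp only [Matrix.sub_apply, Matrix.mul_apply, Fin.sum_univ_four]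
    fin_cases i <;> fin_cases j <;>
      norm_num [thetaMap, diamondBracketR, Matrix.vecHead, Matrix.vecTail, Matrix.cons_val_two, Matrix.cons_val_three] <;> ring
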